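/- arXiv:1712.04120 — 3 statements merged into one kernel-verified Lean document; each statement's English description precedes it below -/
import Mathlib

section
/- Let S be a finite nonempty set and T : S → PMF S a Markov transition kernel such that T(s'|s) > 0 for all s, s' ∈ S. Then T has a stationary distribution, i.e., there exists a probability distribution π on S with Σ_s π(s) T(s'|s) = π(s') for all s'. -/
open scoped ENNReal

-- strict triangle inequality for sums
lemma abs_sum_lt_sum_abs {S : Type} [Fintype S] (a : S → ℝ) (s₀ s₁ : S)
    (h0 : 0 < a s₀) (h1 : a s₁ < 0) : |∑ s, a s| < ∑ s, |a s| := by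
  rcases le_or_gt 0 (∑ s, a s) with h | h
  · rw [abs_of_nonneg h]
    refine Finset.sum_lt_sum (fun i _ => le_abs_self _) ⟨s₁, Finset.mem_univ _, ?_⟩
    calc a s₁ < 0 := h1
    _ ≤ |a s₁| := abs_nonneg _
  · rw [abs_of_neg h, ← Finset.sum_neg_distrib]
    refine Finset.sum_lt_sum (fun i _ => neg_le_abs (a i)) ⟨s₀, Finset.mem_univ _, ?_⟩
    calc -a s₀ < 0 := by linarith
    _ ≤ |a s₀| := abs_nonneg _

theorem stmt_1 {S : Type} [Fintype S] [Nonempty S] (T : S → PMF S)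
    (hpos : ∀ s s', 0 < T s s') :
    ∃ π : PMF S, ∀ s', ∑ s, π s * T s s' = π s' := by
  classical
  set M : Matrix S S ℝ := fun s s' => (T s s').toReal with hM
  have hTtop : ∀ s s', T s s' ≠ ⊤ := fun s s' => PMF.apply_ne_top _ _
  have hMpos : ∀ s s', 0 < M s s' := fun s s' =>
    ENNReal.toReal_pos (hpos s s').ne' (hTtop s s')
  have hrow : ∀ s, ∑ s', M s s' = 1 := by
    intro s
    have h1 : ∑ s', T s s' = 1 := by
      rw [← tsum_fintype (L := .unconditional _)]; exact (T s).tsum_coe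
    have := congrArg ENNReal.toReal h1
    rwa [ENNReal.toReal_sum (fun s' _ => hTtop s s')] at this
  -- determinant argument: ∃ v ≠ 0 with v stationary for M
  have hdet : (1 - Matrix.of M).det = 0 := by
    rw [← Matrix.exists_mulVec_eq_zero_iff]
    refine ⟨fun _ => 1, ?_, ?_⟩
    · intro h; have := congrFun h (Classical.arbitrary S); simp at this
    · funext s
      simp [Matrix.mulVec, dotProduct, Matrix.sub_apply, Matrix.one_apply,
        sub_mul, Finset.sum_sub_distrib, hrow s]
      exact sub_eq_zero.mpr (hrow s).symm
  have hdetT : (Matrix.transpose (1 - Matrix.of M)).det = 0 := by rw [Matrix.det_transpose]; exact hdet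
  obtain ⟨v, hv0, hv⟩ := (Matrix.exists_mulVec_eq_zero_iff).2 hdetT
  have hstat : ∀ s', ∑ s, v s * M s s' = v s' := by
    intro s'
    have := congrFun hv s'
    simp only [Matrix.mulVec, dotProduct, Matrix.transpose_apply, Matrix.sub_apply,
      Matrix.one_apply, Matrix.of_apply, Pi.zero_apply] at this
    have h2 : ∑ s, ((if s = s' then (1:ℝ) else 0) - M s s') * v s = 0 := this
    simp only [sub_mul, Finset.sum_sub_distrib, ite_mul, one_mul, zero_mul,
      Finset.sum_ite_eq', Finset.mem_univ, if_true] at h2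
    have : v s' - ∑ s, M s s' * v s = 0 := h2
    have := sub_eq_zero.mp this
    rw [this]
    exact Finset.sum_congr rfl fun s _ => mul_comm _ _
  -- constant sign
  have hsign : (∀ s, 0 ≤ v s) ∨ (∀ s, v s ≤ 0) := by
    by_contra hc
    push_neg at hc
    obtain ⟨⟨s₁, hs₁⟩, ⟨s₀, hs₀⟩⟩ := hc
    have key : ∀ s', |v s'| < ∑ s, |v s| * M s s' := by
      intro s'
      have := abs_sum_lt_sum_abs (fun s => v s * M s s') s₀ s₁
        (mul_pos hs₀ (hMpos s₀ s')) (mul_neg_of_neg_of_pos hs₁ (hMpos s₁ s'))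
      rw [hstat s'] at this
      simpa [abs_mul, abs_of_pos (hMpos _ s')] using this
    have : ∑ s', |v s'| < ∑ s', ∑ s, |v s| * M s s' :=
      Finset.sum_lt_sum_of_nonempty Finset.univ_nonempty (fun s' _ => key s')
    rw [Finset.sum_comm] at this
    simp_rw [← Finset.mul_sum, hrow, mul_one] at this
    exact lt_irrefl _ this
  -- get nonneg stationary w
  obtain ⟨w, hwnn, hw0, hwstat⟩ :
      ∃ w : S → ℝ, (∀ s, 0 ≤ w s) ∧ w ≠ 0 ∧ ∀ s', ∑ s, w s * M s s' = w s' := by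
    rcases hsign with h | h
    · exact ⟨v, h, hv0, hstat⟩
    · refine ⟨-v, fun s => by simpa using h s, by simpa using hv0, fun s' => ?_⟩
      simp only [Pi.neg_apply, neg_mul, Finset.sum_neg_distrib, hstat s']
  have hc : 0 < ∑ s, w s := by
    obtain ⟨s, hs⟩ := Function.ne_iff.mp hw0
    exact Finset.sum_pos' (fun i _ => hwnn i)
      ⟨s, Finset.mem_univ _, lt_of_le_of_ne (hwnn s) (Ne.symm hs)⟩
  set c := ∑ s, w s with hcdef
  set p : S → ℝ := fun s => w s / c with hp
  have hpnn : ∀ s, 0 ≤ p s := fun s => div_nonneg (hwnn s) hc.le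
  have hpsum : ∑ s, p s = 1 := by
    rw [hp]; simp only [← Finset.sum_div]; exact div_self hc.ne'
  have hpstat : ∀ s', ∑ s, p s * M s s' = p s' := by
    intro s'
    simp only [hp, div_mul_eq_mul_div, ← Finset.sum_div, hwstat s']
  -- build PMF
  have hsum1 : ∑ s, ENNReal.ofReal (p s) = 1 := by
    rw [← ENNReal.ofReal_sum_of_nonneg (fun s _ => hpnn s), hpsum, ENNReal.ofReal_one]
  refine ⟨PMF.ofFintype (fun s => ENNReal.ofReal (p s)) hsum1, fun s' => ?_⟩
  simp only [PMF.ofFintype_apply]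
  have : ∀ s, ENNReal.ofReal (p s) * T s s' = ENNReal.ofReal (p s * M s s') := by
    intro s
    rw [ENNReal.ofReal_mul (hpnn s), hM, ENNReal.ofReal_toReal (hTtop s s')]
  simp_rw [this]
  rw [← ENNReal.ofReal_sum_of_nonneg (fun s _ => mul_nonneg (hpnn s) (hMpos s s').le), hpstat s']
end

section
/- Let S be a finite nonempty set and T : S → PMF S a transition kernel with T(s'|s) > 0 for all s, s'. Then the stationary distribution of T is unique: if π and π' both satisfy πT = π and π'T = π', then π = π'. -/
open scoped ENNReal

theorem stmt_2 {S : Type} [Fintype S] [Nonempty S] (T : S → PMF S)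
    (hpos : ∀ s s', 0 < T s s')
    (π π' : PMF S)
    (hπ : ∀ s', ∑ s, π s * T s s' = π s')
    (hπ' : ∀ s', ∑ s, π' s * T s s' = π' s') :
    π = π' := by
  classical
  have hnt : ∀ (ρ : PMF S) s, ρ s ≠ ∞ := fun ρ s => PMF.apply_ne_top ρ s
  set p : S → ℝ := fun s => (π s).toReal with hp
  set q : S → ℝ := fun s => (π' s).toReal with hq
  set t : S → S → ℝ := fun s s' => (T s s').toReal with ht
  have htpos : ∀ s s', 0 < t s s' := fun s s' =>
    ENNReal.toReal_pos (hpos s s').ne' (hnt _ _)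
  have hsum1 : ∀ (ρ : PMF S), ∑ s, ρ s = 1 := by
    intro ρ; rw [← tsum_fintype (L := .unconditional _)]; exact ρ.tsum_coe
  have hsumR : ∀ (ρ : PMF S), ∑ s, (ρ s).toReal = 1 := by
    intro ρ
    rw [← ENNReal.toReal_sum (fun a _ => hnt ρ a), hsum1, ENNReal.toReal_one]
  have hπR : ∀ s', ∑ s, p s * t s s' = p s' := by
    intro s'
    have := congrArg ENNReal.toReal (hπ s')
    rw [ENNReal.toReal_sum (fun a _ => ENNReal.mul_ne_top (hnt π a) (hnt _ _))] at this
    simpa [ENNReal.toReal_mul] using this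
  have hπ'R : ∀ s', ∑ s, q s * t s s' = q s' := by
    intro s'
    have := congrArg ENNReal.toReal (hπ' s')
    rw [ENNReal.toReal_sum (fun a _ => ENNReal.mul_ne_top (hnt π' a) (hnt _ _))] at this
    simpa [ENNReal.toReal_mul] using this
  -- π' is strictly positive
  have hqpos : ∀ s', 0 < q s' := by
    intro s'
    obtain ⟨s1, hs1⟩ : ∃ s1, 0 < q s1 := by
      by_contra h
      push_neg at h
      have h0 : ∀ s1, q s1 = 0 := fun s1 => le_antisymm (h s1) ENNReal.toReal_nonneg
      have h1 := hsumR π'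
      rw [show (fun s => (π' s).toReal) = q from rfl] at h1
      rw [Finset.sum_congr rfl (fun s _ => h0 s)] at h1
      simp at h1
    have hge : q s1 * t s1 s' ≤ q s' := by
      rw [← hπ'R s']
      exact Finset.single_le_sum
        (fun i _ => mul_nonneg ENNReal.toReal_nonneg (htpos i s').le)
        (Finset.mem_univ s1)
    exact lt_of_lt_of_le (mul_pos hs1 (htpos s1 s')) hge
  -- take minimizing ratio
  obtain ⟨s0, -, hs0⟩ := Finset.exists_min_image Finset.univ (fun s => p s / q s)
    Finset.univ_nonempty
  set c : ℝ := p s0 / q s0 with hc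
  have hle : ∀ s, c * q s ≤ p s := by
    intro s
    have := hs0 s (Finset.mem_univ s)
    calc c * q s ≤ (p s / q s) * q s := by
          exact mul_le_mul_of_nonneg_right this (hqpos s).le
      _ = p s := div_mul_cancel₀ _ (hqpos s).ne'
  have hcq0 : c * q s0 = p s0 := div_mul_cancel₀ _ (hqpos s0).ne'
  have hzero : ∑ s, (p s - c * q s) * t s s0 = 0 := by
    have : ∑ s, (p s - c * q s) * t s s0
        = (∑ s, p s * t s s0) - c * ∑ s, q s * t s s0 := by
      rw [Finset.mul_sum, ← Finset.sum_sub_distrib]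
      congr 1; ext s; ring
    rw [this, hπR, hπ'R, hcq0, sub_self]
  have heq : ∀ s, p s = c * q s := by
    intro s
    have := (Finset.sum_eq_zero_iff_of_nonneg
      (fun i _ => mul_nonneg (sub_nonneg.2 (hle i)) (htpos i s0).le)).1 hzero
      s (Finset.mem_univ s)
    rcases mul_eq_zero.1 this with h | h
    · linarith [sub_eq_zero.1 h]
    · exact absurd h (htpos s s0).ne'
  have hc1 : c = 1 := by
    have h1 : (1 : ℝ) = c * 1 := by
      calc (1 : ℝ) = ∑ s, p s := (hsumR π).symm
        _ = ∑ s, c * q s := Finset.sum_congr rfl fun s _ => heq s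
        _ = c * ∑ s, q s := by rw [Finset.mul_sum]
        _ = c * 1 := by rw [hsumR π']
    linarith
  ext s
  have : p s = q s := by rw [heq s, hc1, one_mul]
  exact (ENNReal.toReal_eq_toReal_iff' (hnt π s) (hnt π' s)).1 this
end

section
/- Let S be a finite nonempty set and T : S → PMF S with T(s'|s) ≥ ε > 0 for all s, s'. Then for any two distributions μ, ν on S, the total variation distance satisfies TV(μT, νT) ≤ (1 − ε·|S|)·TV(μ, ν) whenever ε·|S| ≤ 1; in particular T is a contraction in total variation and iterates of T from any initial distribution converge to the unique stationary distribution. -/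
open scoped ENNReal

theorem stmt_10 {S : Type} [Fintype S] [Nonempty S]
    (T : S → PMF S) (ε : ℝ≥0∞) (hε : 0 < ε)
    (hT : ∀ s s', ε ≤ T s s')
    (hεS : ε * (Fintype.card S : ℝ≥0∞) ≤ 1)
    (μ ν : PMF S) :
    (1 / 2) * ∑ s', |(∑ s, μ s * T s s').toReal - (∑ s, ν s * T s s').toReal| ≤
      (1 - (ε * (Fintype.card S : ℝ≥0∞)).toReal) *
        ((1 / 2) * ∑ s, |(μ s).toReal - (ν s).toReal|) := by
  classical
  have hμtop : ∀ s, μ s ≠ ⊤ := fun s => PMF.apply_ne_top μ s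
  have hνtop : ∀ s, ν s ≠ ⊤ := fun s => PMF.apply_ne_top ν s
  have hTtop : ∀ s s', T s s' ≠ ⊤ := fun s s' => PMF.apply_ne_top (T s) s'
  have hεtop : ε ≠ ⊤ :=
    ne_top_of_le_ne_top (hTtop (Classical.arbitrary S) (Classical.arbitrary S))
      (hT _ _)
  set e : ℝ := ε.toReal with he
  set nR : ℝ := (Fintype.card S : ℝ) with hn
  set d : S → ℝ := fun s => (μ s).toReal - (ν s).toReal with hd
  set P : S → S → ℝ := fun s s' => (T s s').toReal with hP
  have hsumμ : ∑ s, (μ s).toReal = 1 := by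
    have h1 : ∑ s, μ s = 1 := by rw [← tsum_fintype (L := SummationFilter.unconditional _)]; exact μ.tsum_coe
    rw [← ENNReal.toReal_sum (fun s _ => hμtop s), h1, ENNReal.toReal_one]
  have hsumν : ∑ s, (ν s).toReal = 1 := by
    have h1 : ∑ s, ν s = 1 := by rw [← tsum_fintype (L := SummationFilter.unconditional _)]; exact ν.tsum_coe
    rw [← ENNReal.toReal_sum (fun s _ => hνtop s), h1, ENNReal.toReal_one]
  have hsumT : ∀ s, ∑ s', P s s' = 1 := by
    intro s
    have h1 : ∑ s', T s s' = 1 := by rw [← tsum_fintype (L := SummationFilter.unconditional _)]; exact (T s).tsum_coe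
    rw [hP, ← ENNReal.toReal_sum (fun s' _ => hTtop s s'), h1, ENNReal.toReal_one]
  have hPe : ∀ s s', e ≤ P s s' := fun s s' =>
    (ENNReal.toReal_le_toReal hεtop (hTtop s s')).2 (hT s s')
  have hd0 : ∑ s, d s = 0 := by
    simp only [hd, Finset.sum_sub_distrib, hsumμ, hsumν, sub_self]
  have hrw : ∀ s', (∑ s, μ s * T s s').toReal - (∑ s, ν s * T s s').toReal
      = ∑ s, d s * P s s' := by
    intro s'
    rw [ENNReal.toReal_sum (fun s _ => ENNReal.mul_ne_top (hμtop s) (hTtop s s')),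
        ENNReal.toReal_sum (fun s _ => ENNReal.mul_ne_top (hνtop s) (hTtop s s')),
        ← Finset.sum_sub_distrib]
    refine Finset.sum_congr rfl fun s _ => ?_
    rw [ENNReal.toReal_mul, ENNReal.toReal_mul]
    ring
  have hen : (ε * (Fintype.card S : ℝ≥0∞)).toReal = e * nR := by
    rw [ENNReal.toReal_mul]; simp [he, hn]
  -- key pointwise bound
  have key : ∀ s', |∑ s, d s * P s s'| ≤ ∑ s, |d s| * (P s s' - e) := by
    intro s'
    have h1 : ∑ s, d s * P s s' = ∑ s, d s * (P s s' - e) := by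
      simp only [mul_sub, Finset.sum_sub_distrib, ← Finset.sum_mul, hd0, zero_mul,
        sub_zero]
    rw [h1]
    calc |∑ s, d s * (P s s' - e)| ≤ ∑ s, |d s * (P s s' - e)| :=
          Finset.abs_sum_le_sum_abs _ _
      _ = ∑ s, |d s| * (P s s' - e) := by
          refine Finset.sum_congr rfl fun s _ => ?_
          rw [abs_mul, abs_of_nonneg (sub_nonneg.2 (hPe s s'))]
  have main : ∑ s', |∑ s, d s * P s s'| ≤ (1 - e * nR) * ∑ s, |d s| := by
    calc ∑ s', |∑ s, d s * P s s'| ≤ ∑ s', ∑ s, |d s| * (P s s' - e) :=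
          Finset.sum_le_sum fun s' _ => key s'
      _ = ∑ s, ∑ s', |d s| * (P s s' - e) := Finset.sum_comm
      _ = ∑ s, |d s| * (1 - e * nR) := by
          refine Finset.sum_congr rfl fun s _ => ?_
          rw [← Finset.mul_sum, Finset.sum_sub_distrib, hsumT s, Finset.sum_const,
            Finset.card_univ, nsmul_eq_mul]
          ring_nf
          rw [hn]; ring
      _ = (1 - e * nR) * ∑ s, |d s| := by
          rw [Finset.mul_sum]; exact Finset.sum_congr rfl fun s _ => mul_comm _ _
  simp only [hrw, hen]
  have hfin : (1 - e * nR) * ((1/2) * ∑ s, |d s|)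
      = (1/2) * ((1 - e * nR) * ∑ s, |d s|) := by ring
  rw [hfin]
  exact mul_le_mul_of_nonneg_left main (by norm_num)
end
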